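/- arXiv:1611.05679 — 4 statements merged into one kernel-verified Lean document; each statement's English description precedes it below -/
import Mathlib

section
/- Let Q be a key polynomial with ε := ε(Q). If f, g ∈ K[x] both have degree strictly less than deg(Q), then for every b ∈ ℕ, ν(∂_b(fg)) > ν(fg) - bε. -/
open Polynomial
open scoped Classical
noncomputable section

/-- `ν` is (the restriction to nonzero polynomials of) a valuation on `K[x]`,
nontrivial on `K`, with `ν(x) ≥ 0`.  Values are taken in a linearly ordered
field `Γ` (playing the role of the divisible hull of the value group). -/
structure IsVal {K : Type*} [Field K] {Γ : Type*} [Field Γ] [LinearOrder Γ] [IsStrictOrderedRing Γ]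
    (ν : Polynomial K → Γ) : Prop where
  map_mul : ∀ f g : Polynomial K, f ≠ 0 → g ≠ 0 → ν (f * g) = ν f + ν g
  map_add : ∀ f g : Polynomial K, f ≠ 0 → g ≠ 0 → f + g ≠ 0 →
    min (ν f) (ν g) ≤ ν (f + g)
  nontrivial : ∃ a : K, a ≠ 0 ∧ ν (C a) ≠ 0
  nonneg_x : 0 ≤ ν X

/-- `ε(f) = max_{b ≥ 1, ∂_b f ≠ 0} (ν(f) - ν(∂_b f))/b`, where `∂_b` is the
`b`-th formal (Hasse) derivative.  (Terms with `∂_b f = 0` correspond to the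
value `-∞` and are omitted from the maximum.) -/
noncomputable def eps {K : Type*} [Field K] {Γ : Type*} [Field Γ] [LinearOrder Γ] [IsStrictOrderedRing Γ]
    (ν : Polynomial K → Γ) (f : Polynomial K) : Γ :=
  if h : ((Finset.Icc 1 f.natDegree).filter
      fun b => Polynomial.hasseDeriv b f ≠ 0).Nonempty then
    ((Finset.Icc 1 f.natDegree).filter
      fun b => Polynomial.hasseDeriv b f ≠ 0).sup' h
      fun b => (ν f - ν (Polynomial.hasseDeriv b f)) / (b : Γ)
  else 0

/-- A monic (nonconstant) polynomial `Q` is a key polynomial for `ν` if every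
`f ∈ K[x]` with `ε(f) ≥ ε(Q)` satisfies `deg f ≥ deg Q`. -/
def IsKeyPol {K : Type*} [Field K] {Γ : Type*} [Field Γ] [LinearOrder Γ] [IsStrictOrderedRing Γ]
    (ν : Polynomial K → Γ) (Q : Polynomial K) : Prop :=
  Q.Monic ∧ 1 ≤ Q.natDegree ∧
    ∀ f : Polynomial K, 1 ≤ f.natDegree → eps ν Q ≤ eps ν f →
      Q.natDegree ≤ f.natDegree

/-- The `i`-th coefficient `f_i` of the `q`-standard expansion
`f = Σ f_i q^i` (each `f_i = 0` or `deg f_i < deg q`), for `q` monic. -/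
noncomputable def qCoeff {K : Type*} [Field K] (q f : Polynomial K) (i : ℕ) :
    Polynomial K :=
  (f /ₘ q ^ i) %ₘ q

/-- The `q`-truncation `ν_q(f) = min_i ν(f_i q^i)` of `ν`, the minimum taken
over the nonzero coefficients of the `q`-standard expansion of `f`. -/
noncomputable def truncVal {K : Type*} [Field K] {Γ : Type*}
    [Field Γ] [LinearOrder Γ] [IsStrictOrderedRing Γ] (ν : Polynomial K → Γ) (q f : Polynomial K) : Γ :=
  if h : ((Finset.range (f.natDegree + 1)).filter
      fun i => qCoeff q f i ≠ 0).Nonempty then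
    ((Finset.range (f.natDegree + 1)).filter
      fun i => qCoeff q f i ≠ 0).inf' h
      fun i => ν (qCoeff q f i * q ^ i)
  else 0

/-- `I(Q) = {b : (ν(Q) - ν(∂_b Q))/b = ε(Q)}`. -/
def Iset {K : Type*} [Field K] {Γ : Type*} [Field Γ] [LinearOrder Γ] [IsStrictOrderedRing Γ]
    (ν : Polynomial K → Γ) (Q : Polynomial K) : Set ℕ :=
  {b | 1 ≤ b ∧ Polynomial.hasseDeriv b Q ≠ 0 ∧
    (ν Q - ν (Polynomial.hasseDeriv b Q)) / (b : Γ) = eps ν Q}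

/-- `S_Q(f) = {i : ν(f_i Q^i) = ν_Q(f)}` (over nonzero coefficients). -/
def Sset {K : Type*} [Field K] {Γ : Type*} [Field Γ] [LinearOrder Γ] [IsStrictOrderedRing Γ]
    (ν : Polynomial K → Γ) (q f : Polynomial K) : Set ℕ :=
  {i | qCoeff q f i ≠ 0 ∧ ν (qCoeff q f i * q ^ i) = truncVal ν q f}


variable {K : Type*} [Field K] {Γ : Type*} [Field Γ] [LinearOrder Γ] [IsStrictOrderedRing Γ]

/-! By Leibniz, `∂_b (f g) = ∑_{j + k = b} ∂_j f · ∂_k g`. For `1 ≤ j` and `deg f < deg Q`,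
`ν f - ν (∂_j f) ≤ j ε(f) < j ε(Q)`, the strict inequality because `Q` is a key polynomial;
for `j = 0` the two sides agree. As `j + k = b ≥ 1`, every nonzero Leibniz term therefore has
value `> ν f + ν g - b ε(Q)`, and so does their sum. -/

theorem IsVal.lt_val_sum {ν : Polynomial K → Γ} (hν : IsVal ν) {ι : Type*} {s : Finset ι}
    {F : ι → Polynomial K} {c : Γ} (hs : ∑ i ∈ s, F i ≠ 0)
    (hF : ∀ i ∈ s, F i ≠ 0 → c < ν (F i)) : c < ν (∑ i ∈ s, F i) := by
  induction s using Finset.cons_induction with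
  | empty => simp at hs
  | cons a t ha ih =>
    rw [Finset.sum_cons] at hs ⊢
    have ih' : ∑ i ∈ t, F i ≠ 0 → c < ν (∑ i ∈ t, F i) := fun ht =>
      ih ht fun i hi => hF i (Finset.mem_cons_of_mem hi)
    by_cases ha0 : F a = 0
    · rw [ha0, zero_add] at hs ⊢
      exact ih' hs
    by_cases ht0 : ∑ i ∈ t, F i = 0
    · rw [ht0, add_zero]
      exact hF a (Finset.mem_cons_self a t) ha0
    exact (lt_min (hF a (Finset.mem_cons_self a t) ha0) (ih' ht0)).trans_le
      (hν.map_add _ _ ha0 ht0 hs)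

theorem le_natDegree_of_hasseDeriv_ne_zero {f : Polynomial K} {j : ℕ}
    (hd : hasseDeriv j f ≠ 0) : j ≤ f.natDegree :=
  not_lt.mp fun h => hd (hasseDeriv_eq_zero_of_lt_natDegree f j h)

theorem sub_val_hasseDeriv_le_mul_eps (ν : Polynomial K → Γ) {f : Polynomial K} {j : ℕ}
    (hj : 1 ≤ j) (hd : hasseDeriv j f ≠ 0) :
    ν f - ν (hasseDeriv j f) ≤ j * eps ν f := by
  have hmem : j ∈ (Finset.Icc 1 f.natDegree).filter fun b => hasseDeriv b f ≠ 0 := by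
    simp [hj, le_natDegree_of_hasseDeriv_ne_zero hd, hd]
  have hquot : (ν f - ν (hasseDeriv j f)) / j ≤ eps ν f := by
    rw [eps, dif_pos ⟨j, hmem⟩]
    exact Finset.le_sup' (fun b => (ν f - ν (hasseDeriv b f)) / (b : Γ)) hmem
  have hjpos : (0 : Γ) < j := by exact_mod_cast hj
  rwa [div_le_iff₀ hjpos, mul_comm] at hquot

namespace IsKeyPol

variable {ν : Polynomial K → Γ} {Q : Polynomial K}

theorem eps_lt_eps (hQ : IsKeyPol ν Q) {f : Polynomial K} (hf : 1 ≤ f.natDegree)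
    (hfQ : f.natDegree < Q.natDegree) : eps ν f < eps ν Q :=
  lt_of_not_ge fun h => hfQ.not_ge (hQ.2.2 f hf h)

theorem sub_mul_eps_lt_val_hasseDeriv (hQ : IsKeyPol ν Q) {p : Polynomial K}
    (hpQ : p.natDegree < Q.natDegree) {j : ℕ} (hj : 1 ≤ j) (hd : hasseDeriv j p ≠ 0) :
    ν p - j * eps ν Q < ν (hasseDeriv j p) := by
  have hp : 1 ≤ p.natDegree := hj.trans (le_natDegree_of_hasseDeriv_ne_zero hd)
  have hjpos : (0 : Γ) < j := by exact_mod_cast hj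
  have h := mul_lt_mul_of_pos_left (hQ.eps_lt_eps hp hpQ) hjpos
  linarith [sub_val_hasseDeriv_le_mul_eps ν hj hd]

theorem sub_mul_eps_le_val_hasseDeriv (hQ : IsKeyPol ν Q) {p : Polynomial K}
    (hpQ : p.natDegree < Q.natDegree) (j : ℕ) (hd : hasseDeriv j p ≠ 0) :
    ν p - j * eps ν Q ≤ ν (hasseDeriv j p) := by
  rcases Nat.eq_zero_or_pos j with rfl | hj
  · simp
  · exact (hQ.sub_mul_eps_lt_val_hasseDeriv hpQ hj hd).le

theorem lt_val_hasseDeriv_mul_hasseDeriv (hν : IsVal ν) (hQ : IsKeyPol ν Q)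
    {f g : Polynomial K} (hdf : f.natDegree < Q.natDegree) (hdg : g.natDegree < Q.natDegree)
    {j k : ℕ} (hjk : 1 ≤ j + k) (hne : hasseDeriv j f * hasseDeriv k g ≠ 0) :
    ν f + ν g - (j + k : ℕ) * eps ν Q < ν (hasseDeriv j f * hasseDeriv k g) := by
  have hjf := left_ne_zero_of_mul hne
  have hkg := right_ne_zero_of_mul hne
  rw [hν.map_mul _ _ hjf hkg, Nat.cast_add, add_mul]
  rcases Nat.eq_zero_or_pos j with rfl | hj
  · linarith [hQ.sub_mul_eps_le_val_hasseDeriv hdf 0 hjf,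
      hQ.sub_mul_eps_lt_val_hasseDeriv hdg (by omega) hkg]
  · linarith [hQ.sub_mul_eps_lt_val_hasseDeriv hdf hj hjf,
      hQ.sub_mul_eps_le_val_hasseDeriv hdg k hkg]

end IsKeyPol

/-- If `deg f, deg g < deg Q` for a key polynomial `Q`, then
`ν(∂_b (f g)) > ν(f g) - b ε(Q)` for every `b`. -/
theorem deriv_val_mul_gt (ν : Polynomial K → Γ) (hν : IsVal ν)
    (Q : Polynomial K) (hQ : IsKeyPol ν Q) (f g : Polynomial K)
    (hf : f ≠ 0) (hg : g ≠ 0)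
    (hdf : f.natDegree < Q.natDegree) (hdg : g.natDegree < Q.natDegree)
    (b : ℕ) (hb : 1 ≤ b) (hder : Polynomial.hasseDeriv b (f * g) ≠ 0) :
    ν (f * g) - (b : Γ) * eps ν Q < ν (Polynomial.hasseDeriv b (f * g)) := by
  rw [hasseDeriv_mul] at hder ⊢
  rw [hν.map_mul f g hf hg]
  refine hν.lt_val_sum hder fun ⟨j, k⟩ hjk hne => ?_
  rw [Finset.HasAntidiagonal.mem_antidiagonal] at hjk
  subst hjk
  exact hQ.lt_val_hasseDeriv_mul_hasseDeriv hν hdf hdg hb hne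
end
end

section
/- Let Q be a key polynomial with ε := ε(Q), let I(Q) = {b ∈ ℕ : (ν(Q)-ν(∂_b Q))/b = ε}, and let f, g ∈ K[x] with deg(f), deg(g) < deg(Q). If ν_Q(fQ+g) < ν(fQ+g) and b ∈ I(Q), then ν(∂_b(fQ+g)) = ν(fQ) - bε. -/
open Polynomial
open scoped Classical
noncomputable section

variable {K : Type*} [Field K] {Γ : Type*} [Field Γ] [LinearOrder Γ] [IsStrictOrderedRing Γ]

/-! The `Q`-expansion of `h = f Q + g` is `g + f Q`, so `ν_Q(h) = min (ν g) (ν (f Q))`, and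
`ν_Q(h) < ν(h)` forces `ν g = ν (f Q)`. In the Leibniz expansion
`∂_b h = f ∂_b Q + ∑_{i + j = b, i ≥ 1} ∂_i f ∂_j Q + ∂_b g`
the first term has value exactly `ν (f Q) - b ε(Q)` because `b ∈ I(Q)`, and every other term has
strictly larger value: `ε(p) < ε(Q)` whenever `0 < deg p < deg Q` since `Q` is a key polynomial,
while `ν (∂_j Q) ≥ ν Q - j ε(Q)`. -/

open Finset.HasAntidiagonal

namespace IsVal

variable {ν : Polynomial K → Γ} (hν : IsVal ν) {u v : Polynomial K} {c : Γ}
include hν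

theorem map_one : ν 1 = 0 := by
  have h := hν.map_mul 1 1 one_ne_zero one_ne_zero
  rw [one_mul] at h
  linarith

theorem map_neg (hu : u ≠ 0) : ν (-u) = ν u := by
  have h := hν.map_mul (-1) (-1) (by simp) (by simp)
  rw [neg_one_mul, neg_neg, hν.map_one] at h
  rw [← neg_one_mul, hν.map_mul _ _ (by simp) hu, show ν (-1) = 0 by linarith, zero_add]

theorem add_ne_zero_of_lt (hu : u ≠ 0) (h : v ≠ 0 → ν u < ν v) : u + v ≠ 0 := by
  intro huv
  have hv : v = -u := eq_neg_of_add_eq_zero_right huv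
  have := h (hv ▸ neg_ne_zero.2 hu)
  rw [hv, hν.map_neg hu] at this
  exact this.false

theorem map_add_eq_of_lt (hu : u ≠ 0) (h : v ≠ 0 → ν u < ν v) : ν (u + v) = ν u := by
  rcases eq_or_ne v 0 with rfl | hv
  · rw [add_zero]
  have huv := hν.add_ne_zero_of_lt hu h
  refine le_antisymm ?_ ((min_eq_left (h hv).le).symm.trans_le (hν.map_add u v hu hv huv))
  have h' := hν.map_add (u + v) (-v) huv (neg_ne_zero.2 hv) (by simpa using hu)
  rw [add_neg_cancel_right, hν.map_neg hv] at h'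
  exact (min_le_iff.1 h').resolve_right (not_le.2 (h hv))

theorem map_add_eq_min_of_ne (hu : u ≠ 0) (hv : v ≠ 0) (h : ν u ≠ ν v) :
    ν (u + v) = min (ν u) (ν v) := by
  rcases h.lt_or_gt with h | h
  · rw [hν.map_add_eq_of_lt hu fun _ => h, min_eq_left h.le]
  · rw [add_comm, hν.map_add_eq_of_lt hv fun _ => h, min_eq_right h.le]

theorem lt_map_add (hu : u ≠ 0 → c < ν u) (hv : v ≠ 0 → c < ν v) :
    u + v ≠ 0 → c < ν (u + v) := by
  intro huv
  rcases eq_or_ne u 0 with rfl | hu0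
  · simpa using hv (by simpa using huv)
  rcases eq_or_ne v 0 with rfl | hv0
  · simpa using hu hu0
  exact (lt_min (hu hu0) (hv hv0)).trans_le (hν.map_add u v hu0 hv0 huv)

theorem lt_map_sum {ι : Type*} {s : Finset ι} {p : ι → Polynomial K}
    (h : ∀ i ∈ s, p i ≠ 0 → c < ν (p i)) :
    ∑ i ∈ s, p i ≠ 0 → c < ν (∑ i ∈ s, p i) := by
  induction s using Finset.cons_induction with
  | empty => simp
  | cons a s ha ih =>
    rw [Finset.sum_cons]
    exact hν.lt_map_add (h a (Finset.mem_cons_self a s))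
      (ih fun i hi => h i (Finset.mem_cons_of_mem hi))

end IsVal

section Eps

variable {ν : Polynomial K → Γ} {p Q : Polynomial K} {j : ℕ}

theorem div_le_eps (hj : 1 ≤ j) (hd : hasseDeriv j p ≠ 0) :
    (ν p - ν (hasseDeriv j p)) / j ≤ eps ν p := by
  have hmem : j ∈ (Finset.Icc 1 p.natDegree).filter fun b => hasseDeriv b p ≠ 0 :=
    Finset.mem_filter.2 ⟨Finset.mem_Icc.2 ⟨hj, le_of_not_gt fun hlt =>
      hd (hasseDeriv_eq_zero_of_lt_natDegree p j hlt)⟩, hd⟩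
  rw [eps, dif_pos ⟨j, hmem⟩]
  exact Finset.le_sup' (fun b => (ν p - ν (hasseDeriv b p)) / (b : Γ)) hmem

theorem sub_mul_eps_le (hd : hasseDeriv j p ≠ 0) :
    ν p - j * eps ν p ≤ ν (hasseDeriv j p) := by
  rcases Nat.eq_zero_or_pos j with rfl | hj
  · simp
  have := div_le_eps (ν := ν) hj hd
  rw [div_le_iff₀ (by exact_mod_cast hj)] at this
  linarith

theorem val_hasseDeriv_of_mem_Iset {b : ℕ} (hb : b ∈ Iset ν Q) :
    ν (hasseDeriv b Q) = ν Q - b * eps ν Q := by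
  obtain ⟨hb1, -, hbeq⟩ := hb
  rw [div_eq_iff (by exact_mod_cast (Nat.one_le_iff_ne_zero.1 hb1))] at hbeq
  linarith

theorem IsKeyPol.eps_lt (hQ : IsKeyPol ν Q) (hp : 1 ≤ p.natDegree)
    (hpQ : p.natDegree < Q.natDegree) : eps ν p < eps ν Q :=
  lt_of_not_ge fun h => (hQ.2.2 p hp h).not_gt hpQ

theorem IsKeyPol.sub_mul_eps_lt (hQ : IsKeyPol ν Q) (hpQ : p.natDegree < Q.natDegree)
    (hj : 1 ≤ j) (hd : hasseDeriv j p ≠ 0) :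
    ν p - j * eps ν Q < ν (hasseDeriv j p) := by
  have hp : 1 ≤ p.natDegree :=
    hj.trans (le_of_not_gt fun hlt => hd (hasseDeriv_eq_zero_of_lt_natDegree p j hlt))
  have := (div_le_eps hj hd).trans_lt (hQ.eps_lt hp hpQ)
  rw [div_lt_iff₀ (by exact_mod_cast hj)] at this
  linarith

theorem IsKeyPol.lt_val_hasseDeriv_mul {f : Polynomial K} (hν : IsVal ν) (hQ : IsKeyPol ν Q)
    (hf : f ≠ 0) (hfQ : f.natDegree < Q.natDegree) {i b : ℕ} (hij : i + j = b) (hi : i ≠ 0)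
    (h0 : hasseDeriv i f * hasseDeriv j Q ≠ 0) :
    ν (f * Q) - b * eps ν Q < ν (hasseDeriv i f * hasseDeriv j Q) := by
  have hfi := hQ.sub_mul_eps_lt hfQ (Nat.one_le_iff_ne_zero.2 hi) (left_ne_zero_of_mul h0)
  have hQj := sub_mul_eps_le (ν := ν) (right_ne_zero_of_mul h0)
  rw [hν.map_mul _ _ (left_ne_zero_of_mul h0) (right_ne_zero_of_mul h0),
    hν.map_mul _ _ hf hQ.1.ne_zero, ← hij, Nat.cast_add]
  linarith

end Eps

theorem hasseDeriv_mul_add {R : Type*} [CommSemiring R] (f Q g : R[X]) (b : ℕ) :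
    hasseDeriv b (f * Q + g) = f * hasseDeriv b Q +
      (∑ ij ∈ (antidiagonal b).erase (0, b), hasseDeriv ij.1 f * hasseDeriv ij.2 Q +
        hasseDeriv b g) := by
  have h0b : ((0, b) : ℕ × ℕ) ∈ antidiagonal b := mem_antidiagonal.2 (zero_add b)
  rw [map_add, hasseDeriv_mul, ← Finset.add_sum_erase _ _ h0b, hasseDeriv_zero', add_assoc]

section Expansion

variable {Q f g : Polynomial K} (hQ : Q.Monic) (hfQ : f.natDegree < Q.natDegree)
  (hgQ : g.natDegree < Q.natDegree)

include hQ hgQ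

theorem mul_add_divByMonic_and_modByMonic : (f * Q + g) /ₘ Q = f ∧ (f * Q + g) %ₘ Q = g :=
  div_modByMonic_unique f g hQ ⟨by ring, degree_lt_degree hgQ⟩

theorem qCoeff_mul_add_zero : qCoeff Q (f * Q + g) 0 = g := by
  rw [qCoeff, pow_zero, divByMonic_one, (mul_add_divByMonic_and_modByMonic hQ hgQ).2]

theorem natDegree_mul_add (hf : f ≠ 0) : (f * Q + g).natDegree = f.natDegree + Q.natDegree := by
  have hfQ := natDegree_mul hf hQ.ne_zero
  rw [natDegree_add_eq_left_of_natDegree_lt (by omega), hfQ]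

include hfQ

theorem qCoeff_mul_add_one : qCoeff Q (f * Q + g) 1 = f := by
  rw [qCoeff, pow_one, (mul_add_divByMonic_and_modByMonic hQ hgQ).1,
    (modByMonic_eq_self_iff hQ).2 (degree_lt_degree hfQ)]

theorem qCoeff_mul_add_of_two_le {i : ℕ} (hi : 2 ≤ i) : qCoeff Q (f * Q + g) i = 0 := by
  have hdeg : (f * Q + g).natDegree < (Q ^ i).natDegree := by
    rw [hQ.natDegree_pow]
    have := natDegree_add_le (f * Q) g
    have := natDegree_mul_le (p := f) (q := Q)
    have := Nat.mul_le_mul_right Q.natDegree hi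
    omega
  rw [qCoeff, (divByMonic_eq_zero_iff (hQ.pow i)).2 (degree_lt_degree hdeg), zero_modByMonic]

end Expansion

theorem le_truncVal {ν : Polynomial K → Γ} {q p : Polynomial K} {c : Γ}
    (hex : ∃ i ≤ p.natDegree, qCoeff q p i ≠ 0)
    (h : ∀ i, qCoeff q p i ≠ 0 → c ≤ ν (qCoeff q p i * q ^ i)) :
    c ≤ truncVal ν q p := by
  obtain ⟨i, hi, hi0⟩ := hex
  have hmem : i ∈ (Finset.range (p.natDegree + 1)).filter fun i => qCoeff q p i ≠ 0 :=
    Finset.mem_filter.2 ⟨Finset.mem_range.2 (Nat.lt_succ_of_le hi), hi0⟩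
  rw [truncVal, dif_pos ⟨i, hmem⟩]
  exact Finset.le_inf' _ _ fun j hj => h j (Finset.mem_filter.1 hj).2

theorem IsVal.val_eq_of_truncVal_mul_add_lt {ν : Polynomial K → Γ} (hν : IsVal ν)
    {Q f g : Polynomial K} (hQ : Q.Monic) (hf : f ≠ 0) (hfQ : f.natDegree < Q.natDegree)
    (hgQ : g.natDegree < Q.natDegree) (htr : truncVal ν Q (f * Q + g) < ν (f * Q + g)) :
    g ≠ 0 ∧ ν g = ν (f * Q) := by
  have hex : ∃ i ≤ (f * Q + g).natDegree, qCoeff Q (f * Q + g) i ≠ 0 :=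
    ⟨1, by rw [natDegree_mul_add hQ hgQ hf]; omega, by rwa [qCoeff_mul_add_one hQ hfQ hgQ]⟩
  have hle : ∀ c, (g ≠ 0 → c ≤ ν g) → c ≤ ν (f * Q) →
      c ≤ truncVal ν Q (f * Q + g) :=
    fun c hg hfQc => le_truncVal hex fun i hi => match i with
      | 0 => by
        rw [qCoeff_mul_add_zero hQ hgQ] at hi ⊢
        simpa using hg hi
      | 1 => by rwa [qCoeff_mul_add_one hQ hfQ hgQ, pow_one]
      | i + 2 => absurd (qCoeff_mul_add_of_two_le hQ hfQ hgQ (by omega)) hi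
  by_contra hcon
  refine htr.not_ge ?_
  rcases eq_or_ne g 0 with rfl | hg
  · simpa only [add_zero] using hle _ (absurd rfl) le_rfl
  · rw [hν.map_add_eq_min_of_ne (mul_ne_zero hf hQ.ne_zero) hg fun h => hcon ⟨hg, h.symm⟩]
    exact hle _ (fun _ => min_le_right _ _) (min_le_left _ _)

/-- If `deg f, deg g < deg Q`, `ν_Q(fQ + g) < ν(fQ + g)` and `b ∈ I(Q)`, then
`ν(∂_b (fQ + g)) = ν(fQ) - b ε(Q)`. -/
theorem deriv_val_of_trunc_lt (ν : Polynomial K → Γ) (hν : IsVal ν)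
    (Q : Polynomial K) (hQ : IsKeyPol ν Q) (f g : Polynomial K) (hf : f ≠ 0)
    (hdf : f.natDegree < Q.natDegree) (hdg : g.natDegree < Q.natDegree)
    (htr : truncVal ν Q (f * Q + g) < ν (f * Q + g))
    (b : ℕ) (hb : b ∈ Iset ν Q) :
    Polynomial.hasseDeriv b (f * Q + g) ≠ 0 ∧
      ν (Polynomial.hasseDeriv b (f * Q + g)) = ν (f * Q) - (b : Γ) * eps ν Q := by
  obtain ⟨-, hνg⟩ := hν.val_eq_of_truncVal_mul_add_lt hQ.1 hf hdf hdg htr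
  have hlead_ne : f * hasseDeriv b Q ≠ 0 := mul_ne_zero hf hb.2.1
  have hlead : ν (f * hasseDeriv b Q) = ν (f * Q) - b * eps ν Q := by
    rw [hν.map_mul _ _ hf hb.2.1, hν.map_mul _ _ hf hQ.1.ne_zero, val_hasseDeriv_of_mem_Iset hb]
    ring
  have hcross : ∀ ij ∈ (antidiagonal b).erase (0, b),
      hasseDeriv ij.1 f * hasseDeriv ij.2 Q ≠ 0 →
        ν (f * hasseDeriv b Q) < ν (hasseDeriv ij.1 f * hasseDeriv ij.2 Q) := by
    rintro ⟨i, j⟩ hij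
    obtain ⟨hne, hmem⟩ := Finset.mem_erase.1 hij
    rw [mem_antidiagonal] at hmem
    exact hlead ▸ hQ.lt_val_hasseDeriv_mul hν hf hdf hmem (by rintro rfl; simp_all)
  have hlast : hasseDeriv b g ≠ 0 → ν (f * hasseDeriv b Q) < ν (hasseDeriv b g) :=
    fun h0 => hlead ▸ hνg ▸ hQ.sub_mul_eps_lt hdg hb.1 h0
  have hrest := hν.lt_map_add (hν.lt_map_sum hcross) hlast
  rw [hasseDeriv_mul_add, ← hlead]
  exact ⟨hν.add_ne_zero_of_lt hlead_ne hrest, hν.map_add_eq_of_lt hlead_ne hrest⟩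
end
end

section
/- Every key polynomial Q ∈ K[x] for ν is irreducible. -/
/-!
By the Leibniz rule `∂_b (f g) = ∑_{i + j = b} ∂_i f ∂_j g`, together with
`ν (∂_i f) ≥ ν f - i ε(f)`, one gets `ε(f g) ≤ max (ε f) (ε g)`. A key polynomial has
strictly larger `ε` than every polynomial of smaller positive degree, so it cannot be a
product of two such polynomials.
-/

open Polynomial
open scoped Classical
noncomputable section

variable {K : Type*} [Field K] {Γ : Type*} [Field Γ] [LinearOrder Γ] [IsStrictOrderedRing Γ]

theorem IsVal.le_sum {ν : Polynomial K → Γ} (hν : IsVal ν) {ι : Type*} {s : Finset ι}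
    {F : ι → Polynomial K} {c : Γ} (h : ∀ i ∈ s, F i ≠ 0 → c ≤ ν (F i))
    (hs : ∑ i ∈ s, F i ≠ 0) : c ≤ ν (∑ i ∈ s, F i) := by
  induction s using Finset.induction_on with
  | empty => simp at hs
  | insert a s ha ih =>
    rw [Finset.sum_insert ha] at hs ⊢
    have ih' := fun hs' => ih (fun i hi => h i (Finset.mem_insert_of_mem hi)) hs'
    by_cases ha0 : F a = 0
    · rw [ha0, zero_add] at hs ⊢
      exact ih' hs
    by_cases hs0 : ∑ i ∈ s, F i = 0
    · rw [hs0, add_zero]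
      exact h a (Finset.mem_insert_self a s) ha0
    exact (le_min (h a (Finset.mem_insert_self a s) ha0) (ih' hs0)).trans
      (hν.map_add _ _ ha0 hs0 hs)

theorem sub_mul_eps_le_hasseDeriv (ν : Polynomial K → Γ) {f : Polynomial K} {i : ℕ}
    (hf : hasseDeriv i f ≠ 0) : ν f - i * eps ν f ≤ ν (hasseDeriv i f) := by
  rcases Nat.eq_zero_or_pos i with rfl | hi
  · simp
  have hmem : i ∈ (Finset.Icc 1 f.natDegree).filter fun b => hasseDeriv b f ≠ 0 := by
    refine Finset.mem_filter.mpr ⟨Finset.mem_Icc.mpr ⟨hi, ?_⟩, hf⟩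
    by_contra! hlt
    exact hf (hasseDeriv_eq_zero_of_lt_natDegree f i hlt)
  have hle : (ν f - ν (hasseDeriv i f)) / i ≤ eps ν f := by
    rw [eps, dif_pos ⟨i, hmem⟩]
    exact Finset.le_sup' (fun b => (ν f - ν (hasseDeriv b f)) / (b : Γ)) hmem
  rw [div_le_iff₀ (by exact_mod_cast hi)] at hle
  linarith

theorem eps_le_of_forall_hasseDeriv (ν : Polynomial K → Γ) {f : Polynomial K} {M : Γ}
    (hf : 0 < f.natDegree)
    (h : ∀ b : ℕ, 1 ≤ b → hasseDeriv b f ≠ 0 → ν f - b * M ≤ ν (hasseDeriv b f)) :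
    eps ν f ≤ M := by
  have hne : ((Finset.Icc 1 f.natDegree).filter fun b => hasseDeriv b f ≠ 0).Nonempty := by
    refine ⟨f.natDegree, Finset.mem_filter.mpr ⟨Finset.mem_Icc.mpr ⟨hf, le_rfl⟩, ?_⟩⟩
    rw [hasseDeriv_natDegree_eq_C, Ne, C_eq_zero, leadingCoeff_eq_zero]
    exact ne_zero_of_natDegree_gt hf
  rw [eps, dif_pos hne]
  refine Finset.sup'_le _ _ fun b hb => ?_
  obtain ⟨hb, hbf⟩ := Finset.mem_filter.mp hb
  have hb1 := (Finset.mem_Icc.mp hb).1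
  rw [div_le_iff₀ (by exact_mod_cast hb1)]
  linarith [h b hb1 hbf]

theorem eps_mul_le {ν : Polynomial K → Γ} (hν : IsVal ν) {f g : Polynomial K}
    (hf : f ≠ 0) (hg : g ≠ 0) (hfg : 0 < (f * g).natDegree) :
    eps ν (f * g) ≤ max (eps ν f) (eps ν g) := by
  set M := max (eps ν f) (eps ν g)
  refine eps_le_of_forall_hasseDeriv ν hfg fun b _ hb => ?_
  rw [hasseDeriv_mul] at hb ⊢
  refine hν.le_sum (fun ij hij hterm => ?_) hb
  have h1 : hasseDeriv ij.1 f ≠ 0 := left_ne_zero_of_mul hterm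
  have h2 : hasseDeriv ij.2 g ≠ 0 := right_ne_zero_of_mul hterm
  have hsum : (ij.1 : Γ) + ij.2 = b := by exact_mod_cast Finset.HasAntidiagonal.mem_antidiagonal.mp hij
  rw [hν.map_mul _ _ h1 h2, hν.map_mul f g hf hg]
  have m1 : (ij.1 : Γ) * eps ν f ≤ ij.1 * M :=
    mul_le_mul_of_nonneg_left (le_max_left _ _) (Nat.cast_nonneg _)
  have m2 : (ij.2 : Γ) * eps ν g ≤ ij.2 * M :=
    mul_le_mul_of_nonneg_left (le_max_right _ _) (Nat.cast_nonneg _)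
  have : (b : Γ) * M = ij.1 * M + ij.2 * M := by rw [← hsum, add_mul]
  linarith [sub_mul_eps_le_hasseDeriv ν h1, sub_mul_eps_le_hasseDeriv ν h2]

theorem IsKeyPol.eps_lt_of_natDegree_lt {ν : Polynomial K → Γ} {Q f : Polynomial K}
    (hQ : IsKeyPol ν Q) (hf : 0 < f.natDegree) (hfQ : f.natDegree < Q.natDegree) :
    eps ν f < eps ν Q :=
  lt_of_not_ge fun h => (hQ.2.2 f hf h).not_gt hfQ

/-- Every key polynomial is irreducible. -/
theorem keyPol_irreducible (ν : Polynomial K → Γ) (hν : IsVal ν)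
    (Q : Polynomial K) (hQ : IsKeyPol ν Q) : Irreducible Q := by
  have hdeg : 1 ≤ Q.natDegree := hQ.2.1
  rw [hQ.1.irreducible_iff_natDegree]
  refine ⟨fun h1 => by simp [h1] at hdeg, fun f g hf hg hfg => ?_⟩
  by_contra! hpos
  have hdeg_sum : Q.natDegree = f.natDegree + g.natDegree := by
    rw [← hfg, hf.natDegree_mul hg]
  have hlt : max (eps ν f) (eps ν g) < eps ν Q :=
    max_lt (hQ.eps_lt_of_natDegree_lt (by omega) (by omega))
      (hQ.eps_lt_of_natDegree_lt (by omega) (by omega))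
  have hle : eps ν Q ≤ max (eps ν f) (eps ν g) := by
    subst hfg
    exact eps_mul_le hν hf.ne_zero hg.ne_zero hdeg
  exact hle.not_gt hlt
end
end

section
/- Let Q be a key polynomial with ε := ε(Q) and f ∈ K[x]. If for some b ∈ ℕ we have ν_Q(f) - ν_Q(∂_b f) = bε and ν_Q(∂_b f) = ν(∂_b f), then ε(f) ≥ ε; if additionally ν(f) > ν_Q(f), then ε(f) > ε. -/
open Polynomial
open scoped Classical
noncomputable section

variable {K : Type*} [Field K] {Γ : Type*} [Field Γ] [LinearOrder Γ] [IsStrictOrderedRing Γ]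

/-! Writing `f = Σ f_i Q^i`, the ultrametric inequality gives `ν_Q(f) ≤ ν(f)`. Hence
`b ε(Q) = ν_Q(f) - ν(∂_b f) ≤ ν(f) - ν(∂_b f) ≤ b ε(f)`, strictly in the middle when
`ν_Q(f) < ν(f)`. -/

namespace Polynomial

theorem divByMonic_mul {R : Type*} [CommRing R] {p r : R[X]} (hp : p.Monic) (hr : r.Monic)
    (f : R[X]) : f /ₘ (p * r) = f /ₘ p /ₘ r := by
  nontriviality R
  refine (div_modByMonic_unique _ (f %ₘ p + p * (f /ₘ p %ₘ r)) (hp.mul hr) ⟨?_, ?_⟩).1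
  · conv_rhs => rw [← modByMonic_add_div f p, ← modByMonic_add_div (f /ₘ p) r]
    ring
  · rw [hp.degree_mul_comm, hp.degree_mul]
    refine (degree_add_le _ _).trans_lt (max_lt ?_ ?_)
    · exact (degree_modByMonic_lt f hp).trans_le
        (le_add_of_nonneg_left (zero_le_degree_iff.mpr hr.ne_zero))
    · rw [hp.degree_mul_comm, hp.degree_mul]
      exact WithBot.add_lt_add_right (hp.ne_zero ∘ degree_eq_bot.mp) (degree_modByMonic_lt _ hr)

theorem divByMonic_pow_natDegree_succ {R : Type*} [CommRing R] [Nontrivial R] {q : R[X]}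
    (hq : q.Monic) (hq1 : 1 ≤ q.natDegree) (f : R[X]) : f /ₘ q ^ (f.natDegree + 1) = 0 := by
  refine (divByMonic_eq_zero_iff (hq.pow _)).mpr (degree_lt_degree ?_)
  rw [hq.natDegree_pow]
  exact (Nat.lt_succ_self _).trans_le (Nat.le_mul_of_pos_right _ hq1)

end Polynomial

theorem qCoeff_zero (q f : K[X]) : qCoeff q f 0 = f %ₘ q := by
  rw [qCoeff, pow_zero, divByMonic_one]

theorem qCoeff_succ {q : K[X]} (hq : q.Monic) (f : K[X]) (i : ℕ) :
    qCoeff q f (i + 1) = qCoeff q (f /ₘ q) i := by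
  rw [qCoeff, qCoeff, pow_succ', divByMonic_mul hq (hq.pow i)]

theorem sum_qCoeff_mul_pow {q : K[X]} (hq : q.Monic) {f : K[X]} {n : ℕ}
    (hn : f /ₘ q ^ n = 0) : ∑ i ∈ Finset.range n, qCoeff q f i * q ^ i = f := by
  induction n generalizing f with
  | zero => simpa using hn.symm
  | succ n ih =>
    rw [pow_succ', divByMonic_mul hq (hq.pow n)] at hn
    simp_rw [Finset.sum_range_succ', qCoeff_succ hq, pow_succ', mul_left_comm _ q,
      ← Finset.mul_sum, ih hn, qCoeff_zero, pow_zero, mul_one]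
    exact (add_comm _ _).trans (modByMonic_add_div f q)

namespace IsVal

variable {ν : K[X] → Γ}

theorem inf'_le_map_sum (hν : IsVal ν) {ι : Type*} {s : Finset ι} (hs : s.Nonempty)
    {t : ι → K[X]} (ht : ∀ i ∈ s, t i ≠ 0) (hsum : ∑ i ∈ s, t i ≠ 0) :
    s.inf' hs (fun i => ν (t i)) ≤ ν (∑ i ∈ s, t i) := by
  induction hs using Finset.Nonempty.cons_induction with
  | singleton a => simp
  | cons a s _ hs ih =>
    rw [Finset.sum_cons] at hsum ⊢
    rw [Finset.inf'_cons hs]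
    have hta : t a ≠ 0 := ht a (Finset.mem_cons_self a s)
    by_cases hs0 : ∑ i ∈ s, t i = 0
    · rw [hs0, add_zero]
      exact min_le_left _ _
    · exact (min_le_min le_rfl (ih (fun i hi => ht i (Finset.mem_cons_of_mem hi)) hs0)).trans
        (hν.map_add _ _ hta hs0 hsum)

theorem truncVal_le (hν : IsVal ν) {q : K[X]} (hq : q.Monic) (hq1 : 1 ≤ q.natDegree)
    {f : K[X]} (hf : f ≠ 0) : truncVal ν q f ≤ ν f := by
  set s := (Finset.range (f.natDegree + 1)).filter fun i => qCoeff q f i ≠ 0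
  have hsum : ∑ i ∈ s, qCoeff q f i * q ^ i = f := by
    rw [Finset.sum_filter_of_ne, sum_qCoeff_mul_pow hq (divByMonic_pow_natDegree_succ hq hq1 f)]
    intro i _ h hc
    rw [hc, zero_mul] at h
    exact h rfl
  have hs : s.Nonempty := Finset.nonempty_of_sum_ne_zero (by rwa [hsum])
  have hterms : ∀ i ∈ s, qCoeff q f i * q ^ i ≠ 0 := fun i hi =>
    mul_ne_zero (Finset.mem_filter.mp hi).2 (pow_ne_zero _ hq.ne_zero)
  rw [truncVal, dif_pos hs]
  calc s.inf' hs (fun i => ν (qCoeff q f i * q ^ i))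
      ≤ ν (∑ i ∈ s, qCoeff q f i * q ^ i) := hν.inf'_le_map_sum hs hterms (by rwa [hsum])
    _ = ν f := by rw [hsum]

end IsVal

theorem sub_div_le_eps (ν : K[X] → Γ) {f : K[X]} {b : ℕ} (hb : 1 ≤ b)
    (hder : hasseDeriv b f ≠ 0) : (ν f - ν (hasseDeriv b f)) / b ≤ eps ν f := by
  have hbf : b ≤ f.natDegree :=
    not_lt.mp fun h => hder (hasseDeriv_eq_zero_of_lt_natDegree f b h)
  have hmem : b ∈ (Finset.Icc 1 f.natDegree).filter fun c => hasseDeriv c f ≠ 0 :=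
    Finset.mem_filter.mpr ⟨Finset.mem_Icc.mpr ⟨hb, hbf⟩, hder⟩
  rw [eps, dif_pos ⟨b, hmem⟩]
  exact Finset.le_sup' (fun c => (ν f - ν (hasseDeriv c f)) / (c : Γ)) hmem

theorem eps_ge_of_trunc_eq_general (ν : Polynomial K → Γ) (hν : IsVal ν)
    (Q : Polynomial K) (hQ : IsKeyPol ν Q) (f : Polynomial K)
    (b : ℕ) (hb : 1 ≤ b) (hder : Polynomial.hasseDeriv b f ≠ 0)
    (heq : truncVal ν Q f - truncVal ν Q (Polynomial.hasseDeriv b f) =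
      (b : Γ) * eps ν Q)
    (htr : truncVal ν Q (Polynomial.hasseDeriv b f) =
      ν (Polynomial.hasseDeriv b f)) :
    eps ν Q ≤ eps ν f ∧ (truncVal ν Q f < ν f → eps ν Q < eps ν f) := by
  have hf : f ≠ 0 := fun h => hder (by rw [h, map_zero])
  have hb0 : (0 : Γ) < b := by exact_mod_cast hb
  have hεQ : eps ν Q = (truncVal ν Q f - ν (hasseDeriv b f)) / b := by
    rw [eq_div_iff hb0.ne', mul_comm, ← htr, heq]
  have htrunc : truncVal ν Q f ≤ ν f := hν.truncVal_le hQ.1 hQ.2.1 hf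
  have hεf := sub_div_le_eps ν hb hder
  refine ⟨?_, fun hlt => ?_⟩
  · calc eps ν Q ≤ (ν f - ν (hasseDeriv b f)) / b := by rw [hεQ]; gcongr
      _ ≤ eps ν f := hεf
  · calc eps ν Q < (ν f - ν (hasseDeriv b f)) / b := by rw [hεQ]; gcongr
      _ ≤ eps ν f := hεf

/-- If `ν_Q(f) - ν_Q(∂_b f) = b ε(Q)` with `ν_Q(∂_b f) = ν(∂_b f)`, then
`ε(f) ≥ ε(Q)`; if moreover `ν(f) > ν_Q(f)`, then `ε(f) > ε(Q)`. -/
theorem eps_ge_of_trunc_eq (ν : Polynomial K → Γ) (hν : IsVal ν)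
    (Q : Polynomial K) (hQ : IsKeyPol ν Q) (f : Polynomial K) (hf : f ≠ 0)
    (b : ℕ) (hb : 1 ≤ b) (hder : Polynomial.hasseDeriv b f ≠ 0)
    (heq : truncVal ν Q f - truncVal ν Q (Polynomial.hasseDeriv b f) =
      (b : Γ) * eps ν Q)
    (htr : truncVal ν Q (Polynomial.hasseDeriv b f) =
      ν (Polynomial.hasseDeriv b f)) :
    eps ν Q ≤ eps ν f ∧ (truncVal ν Q f < ν f → eps ν Q < eps ν f) :=
  eps_ge_of_trunc_eq_general ν hν Q hQ f b hb hder heq htr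
end
end
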